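/- Under Assumption 3.2 (all coefficients c_{i,m} are positive real numbers): ℝ_{>0}ᵈ ⊆ D, the map φ sends ℝ_{>0}ᵈ into ℝ_{>0}ⁿ, and the set of points of Y° with all coordinates positive real equals exactly φ(ℝ_{>0}ᵈ); that is, Y° ∩ ℝ_{>0}ⁿ = φ(ℝ_{>0}ᵈ). -/

import Mathlib

/-!
On the positive orthant every Laurent polynomial with positive coefficients is positive, and
monomial maps preserve positivity; hence `Γ` and `φ` map `ℝ_{>0}ᵈ` into the positive orthants.
Conversely, since `M` is unimodular, `φ_{Mᵗ}` inverts `φ_{(M⁻¹)ᵗ}` on the torus, so `Γ t` is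
recovered from `φ t` as a monomial image; if `φ t` is positive then so is `Γ t`, and in
particular so are its first `d` coordinates, which are `t`.
-/

noncomputable section

open Finset Matrix
open scoped ComplexOrder

/-- Evaluation of the Laurent monomial `t ^ m` with integer exponent vector `m`. -/
def lmon {d : ℕ} (t : Fin d → ℂ) (m : Fin d → ℤ) : ℂ := ∏ j, t j ^ m j

/-- Evaluation of the Laurent polynomial with support `S` and coefficients `c` at `t`. -/
def leval {d : ℕ} (S : Finset (Fin d → ℤ)) (c : (Fin d → ℤ) → ℂ) (t : Fin d → ℂ) : ℂ :=
  ∑ m ∈ S, c m * lmon t m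

/-- The monomial map `φ_B` whose `j`-th coordinate is `t ^ bⱼ`, `bⱼ` the `j`-th column
of the integer matrix `B`. -/
def monMap {p q : ℕ} (B : Matrix (Fin p) (Fin q) ℤ) (t : Fin p → ℂ) : Fin q → ℂ :=
  fun j => ∏ i, t i ^ B i j

/-- A complex number is a positive real. -/
def IsPosReal (z : ℂ) : Prop := z.im = 0 ∧ 0 < z.re

/-- The positive orthant `ℝ_{>0}ᵖ` inside `ℂᵖ`. -/
def posOrthant (p : ℕ) : Set (Fin p → ℂ) := {t | ∀ j, IsPosReal (t j)}

lemma isPosReal_iff_pos {z : ℂ} : IsPosReal z ↔ 0 < z := by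
  rw [Complex.pos_iff, IsPosReal, eq_comm, and_comm]

lemma mem_posOrthant_iff {p : ℕ} {t : Fin p → ℂ} : t ∈ posOrthant p ↔ ∀ j, 0 < t j :=
  forall_congr' fun _ => isPosReal_iff_pos

lemma lmon_pos {d : ℕ} {t : Fin d → ℂ} (ht : ∀ j, 0 < t j) (m : Fin d → ℤ) : 0 < lmon t m :=
  prod_pos fun j _ => zpow_pos (ht j) _

lemma leval_pos {d : ℕ} {S : Finset (Fin d → ℤ)} (hS : S.Nonempty) {c : (Fin d → ℤ) → ℂ}
    (hc : ∀ m ∈ S, 0 < c m) {t : Fin d → ℂ} (ht : ∀ j, 0 < t j) : 0 < leval S c t :=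
  sum_pos (fun m hm => mul_pos (hc m hm) (lmon_pos ht m)) hS

lemma monMap_pos {p q : ℕ} (B : Matrix (Fin p) (Fin q) ℤ) {t : Fin p → ℂ}
    (ht : ∀ i, 0 < t i) (j : Fin q) : 0 < monMap B t j :=
  prod_pos fun i _ => zpow_pos (ht i) _

lemma zpow_sum₀ {ι G₀ : Type*} [CommGroupWithZero G₀] {x : G₀} (hx : x ≠ 0) (s : Finset ι)
    (f : ι → ℤ) : x ^ (∑ i ∈ s, f i) = ∏ i ∈ s, x ^ f i :=
  cons_induction (by simp) (fun _ _ _ ih => by rw [sum_cons, prod_cons, zpow_add₀ hx, ih]) s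

lemma monMap_one {p : ℕ} (t : Fin p → ℂ) : monMap (1 : Matrix (Fin p) (Fin p) ℤ) t = t := by
  funext j
  rw [monMap, prod_eq_single j (fun i _ hij => by rw [one_apply_ne hij, zpow_zero]) (by simp)]
  simp

lemma monMap_monMap {p q r : ℕ} (A : Matrix (Fin p) (Fin q) ℤ) (B : Matrix (Fin q) (Fin r) ℤ)
    {t : Fin p → ℂ} (ht : ∀ i, t i ≠ 0) : monMap B (monMap A t) = monMap (A * B) t := by
  funext j
  calc ∏ i, (∏ l, t l ^ A l i) ^ B i j
      = ∏ i, ∏ l, t l ^ (A l i * B i j) := by simp_rw [← prod_zpow, _root_.zpow_mul]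
    _ = ∏ l, ∏ i, t l ^ (A l i * B i j) := prod_comm
    _ = ∏ l, t l ^ (A * B) l j := by simp_rw [mul_apply, zpow_sum₀ (ht _)]

lemma monMap_transpose_monMap_inv_transpose {n : ℕ} {M : Matrix (Fin n) (Fin n) ℤ}
    (hM : IsUnit M.det) {t : Fin n → ℂ} (ht : ∀ i, t i ≠ 0) :
    monMap Mᵀ (monMap M⁻¹ᵀ t) = t := by
  rw [monMap_monMap _ _ ht, ← transpose_mul, mul_nonsing_inv M hM, transpose_one, monMap_one]

theorem statement5_general
    (d k : ℕ)
    -- the Laurent polynomials `f i` with nonempty support `S i`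
    (S : Fin k → Finset (Fin d → ℤ)) (hS : ∀ i, (S i).Nonempty)
    (c : Fin k → (Fin d → ℤ) → ℂ)
    -- Assumption 3.2: all coefficients `c i m` (for `m ∈ S i`) are positive reals
    (hc : ∀ i, ∀ m ∈ S i, IsPosReal (c i m))
    -- the unimodular matrix `M` whose first `d` rows are `F` and last `k` rows are the `a i`
    (M : Matrix (Fin (d + k)) (Fin (d + k)) ℤ)
    (hMdet : M.det = 1 ∨ M.det = -1)
    -- the domain `D = {t ∈ (ℂ*)^d : f i (t) ≠ 0 for all i}`
    (D : Set (Fin d → ℂ))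
    (hD : D = {t | (∀ j, t j ≠ 0) ∧ ∀ i, leval (S i) (c i) t ≠ 0})
    -- the graph map `Γ` and the parametrization `φ = φ_{(M⁻¹)ᵗ} ∘ Γ`
    (Γ : (Fin d → ℂ) → Fin (d + k) → ℂ)
    (hΓ : ∀ t, Γ t = Fin.append t (fun i => (leval (S i) (c i) t)⁻¹))
    (φ : (Fin d → ℂ) → Fin (d + k) → ℂ)
    (hφ : ∀ t, φ t = monMap (M⁻¹)ᵀ (Γ t)) :
    posOrthant d ⊆ D ∧
    φ '' posOrthant d ⊆ posOrthant (d + k) ∧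
    (φ '' D) ∩ posOrthant (d + k) = φ '' posOrthant d := by
  have hf_pos : ∀ t, (∀ j, 0 < t j) → ∀ i, 0 < leval (S i) (c i) t := fun t ht i =>
    leval_pos (hS i) (fun m hm => isPosReal_iff_pos.1 (hc i m hm)) ht
  have hΓ_pos : ∀ t, (∀ j, 0 < t j) → ∀ j, 0 < Γ t j := fun t ht => by
    simpa [hΓ, Fin.forall_fin_add] using ⟨ht, fun i => hf_pos t ht i⟩
  have hpos_D : posOrthant d ⊆ D := fun t ht => by
    rw [mem_posOrthant_iff] at ht
    exact hD ▸ ⟨fun j => (ht j).ne', fun i => (hf_pos t ht i).ne'⟩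
  have hφ_pos : φ '' posOrthant d ⊆ posOrthant (d + k) := by
    rintro _ ⟨t, ht, rfl⟩
    rw [mem_posOrthant_iff] at ht ⊢
    exact hφ t ▸ monMap_pos _ (hΓ_pos t ht)
  refine ⟨hpos_D, hφ_pos, subset_antisymm ?_ (Set.subset_inter (Set.image_mono hpos_D) hφ_pos)⟩
  rintro _ ⟨⟨t, htD, rfl⟩, hy⟩
  obtain ⟨ht0, hf0⟩ := hD ▸ htD
  have hΓ0 : ∀ j, Γ t j ≠ 0 := by simpa [hΓ, Fin.forall_fin_add] using ⟨ht0, hf0⟩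
  have hM : IsUnit M.det := by rcases hMdet with h | h <;> simp [h]
  have hΓ_eq : monMap Mᵀ (φ t) = Γ t := by
    rw [hφ, monMap_transpose_monMap_inv_transpose hM hΓ0]
  have hΓt := monMap_pos Mᵀ (mem_posOrthant_iff.1 hy)
  rw [hΓ_eq] at hΓt
  refine ⟨t, mem_posOrthant_iff.2 fun j => ?_, rfl⟩
  simpa [hΓ] using hΓt (Fin.castAdd k j)

theorem statement5
    (d k : ℕ) (hd : 1 ≤ d) (hk : 1 ≤ k)
    -- the Laurent polynomials `f i` with nonempty support `S i`
    (S : Fin k → Finset (Fin d → ℤ)) (hS : ∀ i, (S i).Nonempty)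
    (c : Fin k → (Fin d → ℤ) → ℂ)
    -- Assumption 3.2: all coefficients `c i m` (for `m ∈ S i`) are positive reals
    (hc : ∀ i, ∀ m ∈ S i, IsPosReal (c i m))
    -- the columns `u j` of `F` and the vectors `a i` with `a i j = -min_{m ∈ S i} ⟨u j, m⟩`
    (u : Fin (d + k) → Fin d → ℤ)
    (a : Fin k → Fin (d + k) → ℤ)
    (ha_le : ∀ i j, ∀ m ∈ S i, 0 ≤ (∑ l, u j l * m l) + a i j)
    (ha_min : ∀ i j, ∃ m ∈ S i, (∑ l, u j l * m l) + a i j = 0)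
    -- the unimodular matrix `M` whose first `d` rows are `F` and last `k` rows are the `a i`
    (M : Matrix (Fin (d + k)) (Fin (d + k)) ℤ)
    (hMF : ∀ (i : Fin d) (j : Fin (d + k)), M (Fin.castAdd k i) j = u j i)
    (hMA : ∀ (i : Fin k) (j : Fin (d + k)), M (Fin.natAdd d i) j = a i j)
    (hMdet : M.det = 1 ∨ M.det = -1)
    -- the domain `D = {t ∈ (ℂ*)^d : f i (t) ≠ 0 for all i}`
    (D : Set (Fin d → ℂ))
    (hD : D = {t | (∀ j, t j ≠ 0) ∧ ∀ i, leval (S i) (c i) t ≠ 0})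
    -- the graph map `Γ` and the parametrization `φ = φ_{(M⁻¹)ᵗ} ∘ Γ`
    (Γ : (Fin d → ℂ) → Fin (d + k) → ℂ)
    (hΓ : ∀ t, Γ t = Fin.append t (fun i => (leval (S i) (c i) t)⁻¹))
    (φ : (Fin d → ℂ) → Fin (d + k) → ℂ)
    (hφ : ∀ t, φ t = monMap (M⁻¹)ᵀ (Γ t)) :
    posOrthant d ⊆ D ∧
    φ '' posOrthant d ⊆ posOrthant (d + k) ∧
    (φ '' D) ∩ posOrthant (d + k) = φ '' posOrthant d :=
  statement5_general d k S hS c hc M hMdet D hD Γ hΓ φ hφ
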